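/- arXiv:2208.08260 — 2 statements merged into one kernel-verified Lean document; each statement's English description precedes it below -/
import Mathlib

section
/- Let f : H → ℝ be convex and lower semicontinuous with argmin_H f nonempty, and let α > 1. Define the step sizes by s_0 = 0 and s_{k+1} = (α − 1 + √((α−1)² + 4s_k²))/2 for k ≥ 0. Let (y_k)_{k≥0}, (η_k)_{k≥1}, (x_k)_{k≥0} ⊆ H be sequences such that for every k ≥ 0, η_{k+1} is a subgradient of f at y_{k+1}, y_{k+1} = y_k − (s_{k+1}/(α−1))·η_{k+1}, and x_{k+1} = (1 − (α−1)/s_{k+1})·x_k + ((α−1)/s_{k+1})·y_{k+1}. Then there exists a constant C ≥ 0 such that f(x_k) − inf_H f ≤ C/s_k² ≤ 4C/((α−1)²(k+1)²) for all k ≥ 1, and (x_k) converges weakly as k → ∞ to some point of S = argmin_H f, i.e., there exists x* ∈ S such that ⟨x_k − x*, v⟩ → 0 as k → ∞ for every v ∈ H. -/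
/-!
The sequence `y` is a proximal-point sequence for `f` with step sizes `s (k+1) / (α - 1) ≥ 1`,
hence Fejér monotone with respect to `argmin f` with `f (y k) → min f`; by Opial's lemma it
converges weakly to a minimizer. The identity `s (k+1)^2 = (α - 1) s (k+1) + s k ^ 2` makes `x k`
the average of `y 1, …, y k` with weights `(α - 1) s j`, which transfers the weak convergence to
`x`, and it makes `s k ^ 2 (f (x k) - f u) + (α - 1)^2 / 2 ‖y k - u‖^2` nonincreasing for every
`u`, which gives the rate.
-/

open Filter Set
open scoped Topology RealInnerProductSpace

lemma cauchySeq_of_forall_dist_le_cauchySeq {α : Type*} [PseudoMetricSpace α] {a : ℕ → α}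
    (h : ∀ ε > 0, ∃ b : ℕ → α, CauchySeq b ∧ ∀ k, dist (a k) (b k) ≤ ε) : CauchySeq a := by
  refine Metric.cauchySeq_iff.2 fun ε hε => ?_
  obtain ⟨b, hb, hab⟩ := h (ε / 4) (by positivity)
  obtain ⟨N, hN⟩ := Metric.cauchySeq_iff.1 hb (ε / 4) (by positivity)
  refine ⟨N, fun m hm n hn => ?_⟩
  calc dist (a m) (a n) ≤ dist (a m) (b m) + dist (b m) (b n) + dist (b n) (a n) :=
        dist_triangle4 _ _ _ _
    _ < ε := by linarith [hab m, hab n, hN m hm n hn, dist_comm (b n) (a n)]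

section WeakConvergence

variable {H : Type*} [NormedAddCommGroup H] [InnerProductSpace ℝ H]

def TendstoWeakly (z : ℕ → H) (q : H) : Prop :=
  ∀ v, Tendsto (fun k => ⟪z k, v⟫) atTop (𝓝 ⟪q, v⟫)

lemma TendstoWeakly.comp {z : ℕ → H} {q : H} (h : TendstoWeakly z q) {φ : ℕ → ℕ}
    (hφ : Tendsto φ atTop atTop) : TendstoWeakly (z ∘ φ) q :=
  fun v => (h v).comp hφ

lemma exists_subseq_forall_tendsto_inner {z : ℕ → H} {R : ℝ} (hz : ∀ k, ‖z k‖ ≤ R)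
    (v : ℕ → H) :
    ∃ φ : ℕ → ℕ, StrictMono φ ∧ ∀ i, ∃ l, Tendsto (fun k => ⟪z (φ k), v i⟫) atTop (𝓝 l) := by
  have hbox : ∀ k, (fun i => ⟪z k, v i⟫) ∈ univ.pi fun i => Icc (-(R * ‖v i‖)) (R * ‖v i‖) :=
    fun k i _ => abs_le.1 <| (abs_real_inner_le_norm _ _).trans <|
      mul_le_mul_of_nonneg_right (hz k) (norm_nonneg _)
  obtain ⟨l, -, φ, hφ, hl⟩ := (isCompact_univ_pi fun i => isCompact_Icc).isSeqCompact hbox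
  exact ⟨φ, hφ, fun i => ⟨l i, tendsto_pi_nhds.1 hl i⟩⟩

lemma exists_tendsto_inner_of_mem_span {z : ℕ → H} {S : Set H}
    (hS : ∀ u ∈ S, ∃ l, Tendsto (fun k => ⟪z k, u⟫) atTop (𝓝 l)) {u : H}
    (hu : u ∈ Submodule.span ℝ S) : ∃ l, Tendsto (fun k => ⟪z k, u⟫) atTop (𝓝 l) := by
  induction hu using Submodule.span_induction with
  | mem w hw => exact hS w hw
  | zero => exact ⟨0, by simpa only [inner_zero_right] using tendsto_const_nhds⟩
  | add u w _ _ hu hw =>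
    obtain ⟨l, hl⟩ := hu
    obtain ⟨l', hl'⟩ := hw
    exact ⟨l + l', by simpa only [inner_add_right] using hl.add hl'⟩
  | smul c u _ hu =>
    obtain ⟨l, hl⟩ := hu
    exact ⟨c * l, by simpa only [real_inner_smul_right] using hl.const_mul c⟩

lemma exists_tendsto_inner_of_mem_closure {z : ℕ → H} {R : ℝ} (hz : ∀ k, ‖z k‖ ≤ R)
    {S : Set H} (hS : ∀ u ∈ S, ∃ l, Tendsto (fun k => ⟪z k, u⟫) atTop (𝓝 l)) {u : H}
    (hu : u ∈ closure S) : ∃ l, Tendsto (fun k => ⟪z k, u⟫) atTop (𝓝 l) := by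
  have hR : 0 ≤ R := (norm_nonneg _).trans (hz 0)
  refine cauchySeq_tendsto_of_complete <|
    cauchySeq_of_forall_dist_le_cauchySeq fun ε hε => ?_
  obtain ⟨w, hw, huw⟩ := Metric.mem_closure_iff.1 hu (ε / (R + 1)) (by positivity)
  obtain ⟨l, hl⟩ := hS w hw
  refine ⟨_, hl.cauchySeq, fun k => ?_⟩
  rw [Real.dist_eq, ← inner_sub_right]
  calc |⟪z k, u - w⟫| ≤ ‖z k‖ * ‖u - w‖ := abs_real_inner_le_norm _ _
    _ ≤ (R + 1) * (ε / (R + 1)) := by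
        rw [← dist_eq_norm]
        exact mul_le_mul (by linarith [hz k]) huw.le dist_nonneg (by positivity)
    _ = ε := by field_simp

lemma eq_of_tendstoWeakly_of_tendsto_norm_sub {z : ℕ → H} {q q' : H} {L L' : ℝ}
    (hq : Tendsto (fun k => ‖z k - q‖) atTop (𝓝 L))
    (hq' : Tendsto (fun k => ‖z k - q'‖) atTop (𝓝 L'))
    {φ ψ : ℕ → ℕ} (hφ : Tendsto φ atTop atTop) (hψ : Tendsto ψ atTop atTop)
    (hzq : TendstoWeakly (z ∘ φ) q) (hzq' : TendstoWeakly (z ∘ ψ) q') : q = q' := by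
  have key : ∀ k, ⟪z k, q - q'⟫ = (‖z k - q'‖ ^ 2 - ‖z k - q‖ ^ 2 + (‖q‖ ^ 2 - ‖q'‖ ^ 2)) / 2 := by
    intro k
    rw [norm_sub_sq_real, norm_sub_sq_real, inner_sub_right]
    ring
  have hc : Tendsto (fun k => ⟪z k, q - q'⟫) atTop
      (𝓝 ((L' ^ 2 - L ^ 2 + (‖q‖ ^ 2 - ‖q'‖ ^ 2)) / 2)) := by
    simp only [key]
    exact (((hq'.pow 2).sub (hq.pow 2)).add_const _).div_const 2
  have h := (tendsto_nhds_unique (hzq (q - q')) (hc.comp hφ)).trans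
    (tendsto_nhds_unique (hzq' (q - q')) (hc.comp hψ)).symm
  rwa [← sub_eq_zero, ← inner_sub_left, inner_self_eq_zero, sub_eq_zero] at h

lemma TendstoWeakly.weighted_cesaro {z x : ℕ → H} {q : H} (hz : TendstoWeakly z q)
    {w : ℕ → ℝ} (hw : 0 ≤ w) (hW : Tendsto (fun k => ∑ j ∈ Finset.range k, w j) atTop atTop)
    (hx : ∀ k, (∑ j ∈ Finset.range k, w j) • x k = ∑ j ∈ Finset.range k, w j • z j) :
    TendstoWeakly x q := by
  intro v
  have hc : (fun j => w j * (⟪z j, v⟫ - ⟪q, v⟫)) =o[atTop] w := by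
    simpa using (Asymptotics.isBigO_refl w atTop).mul_isLittleO
      ((Asymptotics.isLittleO_one_iff ℝ).2 (tendsto_sub_nhds_zero_iff.2 (hz v)))
  rw [← tendsto_sub_nhds_zero_iff]
  refine (hc.sum_range hw hW).tendsto_div_nhds_zero.congr' ?_
  filter_upwards [hW.eventually_gt_atTop 0] with k hk
  have h := congrArg (fun y => ⟪y, v⟫) (hx k)
  simp only [real_inner_smul_left, sum_inner] at h
  rw [div_eq_iff hk.ne']
  simp only [mul_sub, Finset.sum_sub_distrib, ← Finset.sum_mul]
  rw [← h]
  ring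

variable [CompleteSpace H]

lemma exists_tendstoWeakly_of_forall_exists_tendsto {z : ℕ → H}
    (h : ∀ v, ∃ l, Tendsto (fun k => ⟪z k, v⟫) atTop (𝓝 l)) : ∃ q, TendstoWeakly z q := by
  choose L hL using h
  let ℓ := continuousLinearMapOfTendsto (fun k => innerSL ℝ (z k)) (tendsto_pi_nhds.2 hL)
  refine ⟨(InnerProductSpace.toDual ℝ H).symm ℓ, fun v => ?_⟩
  rw [InnerProductSpace.toDual_symm_apply]
  exact hL v

theorem exists_subseq_tendstoWeakly {z : ℕ → H} (hz : Bornology.IsBounded (range z)) :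
    ∃ φ : ℕ → ℕ, StrictMono φ ∧ ∃ q, TendstoWeakly (z ∘ φ) q := by
  obtain ⟨R, hR⟩ := isBounded_iff_forall_norm_le.1 hz
  have hzR : ∀ k, ‖z k‖ ≤ R := fun k => hR _ ⟨k, rfl⟩
  -- Extract a subsequence converging against every `z i`; this extends to the closed span of
  -- the `z i`, and orthogonal projection onto that span reduces every `v` to it.
  obtain ⟨φ, hφ, hconv⟩ := exists_subseq_forall_tendsto_inner hzR z
  refine ⟨φ, hφ, exists_tendstoWeakly_of_forall_exists_tendsto fun v => ?_⟩
  set K := (Submodule.span ℝ (range z)).topologicalClosure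
  have hspan : ∀ u ∈ Submodule.span ℝ (range z), ∃ l,
      Tendsto (fun k => ⟪z (φ k), u⟫) atTop (𝓝 l) := fun u hu =>
    exists_tendsto_inner_of_mem_span (by rintro _ ⟨i, rfl⟩; exact hconv i) hu
  obtain ⟨l, hl⟩ := exists_tendsto_inner_of_mem_closure (fun k => hzR (φ k)) hspan
    (K.starProjection_apply_mem v)
  refine ⟨l, hl.congr fun k => ?_⟩
  have hzK : z (φ k) ∈ K :=
    Submodule.le_topologicalClosure _ (Submodule.subset_span ⟨φ k, rfl⟩)
  have h := K.starProjection_inner_eq_zero v _ hzK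
  rw [inner_sub_left, sub_eq_zero] at h
  rw [Function.comp_apply, real_inner_comm, ← h, real_inner_comm]

lemma TendstoWeakly.mem_of_convex_of_isClosed {z : ℕ → H} {q : H} (h : TendstoWeakly z q)
    {C : Set H} (hC : Convex ℝ C) (hC' : IsClosed C) (hz : ∀ᶠ k in atTop, z k ∈ C) : q ∈ C := by
  by_contra hq
  obtain ⟨ℓ, u, hℓC, hℓq⟩ := geometric_hahn_banach_closed_point hC hC' hq
  have hℓ : Tendsto (fun k => ℓ (z k)) atTop (𝓝 (ℓ q)) := by
    simpa only [real_inner_comm ((InnerProductSpace.toDual ℝ H).symm ℓ),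
      InnerProductSpace.toDual_symm_apply] using h ((InnerProductSpace.toDual ℝ H).symm ℓ)
  exact (le_of_tendsto hℓ (hz.mono fun k hk => (hℓC _ hk).le)).not_gt hℓq

lemma TendstoWeakly.le_of_tendsto {f : H → ℝ} (hf : ConvexOn ℝ univ f)
    (hf' : LowerSemicontinuous f) {z : ℕ → H} {q : H} (h : TendstoWeakly z q) {m : ℝ}
    (hm : Tendsto (fun k => f (z k)) atTop (𝓝 m)) : f q ≤ m := by
  refine le_of_forall_pos_le_add fun ε hε => ?_
  have hconv : Convex ℝ {w | f w ≤ m + ε} := by simpa using hf.convex_le (m + ε)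
  exact h.mem_of_convex_of_isClosed hconv (hf'.isClosed_preimage (m + ε))
    (hm.eventually (ge_mem_nhds (by linarith)))

/-- Opial's lemma. -/
theorem exists_tendstoWeakly_of_tendsto_norm_sub {z : ℕ → H} {S : Set H} (hS : S.Nonempty)
    (hnorm : ∀ u ∈ S, ∃ L, Tendsto (fun k => ‖z k - u‖) atTop (𝓝 L))
    (hcluster : ∀ φ : ℕ → ℕ, Tendsto φ atTop atTop → ∀ q, TendstoWeakly (z ∘ φ) q → q ∈ S) :
    ∃ q ∈ S, TendstoWeakly z q := by
  obtain ⟨u, hu⟩ := hS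
  obtain ⟨L, hL⟩ := hnorm u hu
  have hbdd : Bornology.IsBounded (range z) := by
    obtain ⟨B, hB⟩ := hL.bddAbove_range
    refine isBounded_iff_forall_norm_le.2 ⟨B + ‖u‖, ?_⟩
    rintro _ ⟨k, rfl⟩
    calc ‖z k‖ = ‖z k - u + u‖ := by rw [sub_add_cancel]
      _ ≤ ‖z k - u‖ + ‖u‖ := norm_add_le _ _
      _ ≤ B + ‖u‖ := by gcongr; exact hB ⟨k, rfl⟩
  obtain ⟨φ, hφ, q, hq⟩ := exists_subseq_tendstoWeakly hbdd
  have hqS := hcluster φ hφ.tendsto_atTop q hq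
  refine ⟨q, hqS, fun v => tendsto_of_subseq_tendsto fun ns hns => ?_⟩
  obtain ⟨ψ, hψ, q', hq'⟩ :=
    exists_subseq_tendstoWeakly (hbdd.subset (range_comp_subset_range ns z))
  have hnsψ : Tendsto (ns ∘ ψ) atTop atTop := hns.comp hψ.tendsto_atTop
  obtain ⟨Lq, hLq⟩ := hnorm q hqS
  obtain ⟨Lq', hLq'⟩ := hnorm q' (hcluster _ hnsψ q' hq')
  obtain rfl := eq_of_tendstoWeakly_of_tendsto_norm_sub hLq hLq' hφ.tendsto_atTop hnsψ hq hq'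
  exact ⟨ψ, hq' v⟩

end WeakConvergence

noncomputable def stepSize (β : ℝ) : ℕ → ℝ
  | 0 => 0
  | k + 1 => (β + √(β ^ 2 + 4 * stepSize β k ^ 2)) / 2

section StepSize

variable {β : ℝ}

lemma eq_stepSize {s : ℕ → ℝ} (h0 : s 0 = 0)
    (hs : ∀ k, s (k + 1) = (β + √(β ^ 2 + 4 * s k ^ 2)) / 2) : s = stepSize β := by
  funext k
  induction k with
  | zero => exact h0
  | succ k ih => rw [hs, ih, stepSize]

lemma stepSize_succ_sq (β : ℝ) (k : ℕ) :
    stepSize β (k + 1) ^ 2 = β * stepSize β (k + 1) + stepSize β k ^ 2 := by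
  have h := Real.sq_sqrt (by positivity : 0 ≤ β ^ 2 + 4 * stepSize β k ^ 2)
  rw [stepSize]
  linear_combination h / 4

lemma sum_mul_stepSize (β : ℝ) (k : ℕ) :
    ∑ j ∈ Finset.range k, β * stepSize β (j + 1) = stepSize β k ^ 2 := by
  induction k with
  | zero => simp [stepSize]
  | succ k ih => rw [Finset.sum_range_succ, ih, stepSize_succ_sq]; ring

lemma le_stepSize_succ (β : ℝ) (k : ℕ) : β ≤ stepSize β (k + 1) := by
  have : β ≤ √(β ^ 2 + 4 * stepSize β k ^ 2) :=
    Real.le_sqrt_of_sq_le (le_add_of_nonneg_right (by positivity))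
  rw [stepSize]
  linarith

lemma stepSize_succ_pos (hβ : 0 < β) (k : ℕ) : 0 < stepSize β (k + 1) :=
  hβ.trans_le (le_stepSize_succ β k)

lemma sq_stepSize_succ_mul_div (hβ : 0 < β) (k : ℕ) :
    stepSize β (k + 1) ^ 2 * (β / stepSize β (k + 1)) = β * stepSize β (k + 1) := by
  field_simp [(stepSize_succ_pos hβ k).ne']

lemma sq_stepSize_succ_mul_one_sub (hβ : 0 < β) (k : ℕ) :
    stepSize β (k + 1) ^ 2 * (1 - β / stepSize β (k + 1)) = stepSize β k ^ 2 := by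
  rw [mul_one_sub, sq_stepSize_succ_mul_div hβ, stepSize_succ_sq]
  ring

lemma stepSize_add_half_le (β : ℝ) (k : ℕ) :
    stepSize β k + β / 2 ≤ stepSize β (k + 1) := by
  have : 2 * stepSize β k ≤ √(β ^ 2 + 4 * stepSize β k ^ 2) :=
    Real.le_sqrt_of_sq_le (by nlinarith)
  rw [stepSize]
  linarith

lemma mul_succ_div_two_le_stepSize (β : ℝ) {k : ℕ} (hk : 1 ≤ k) :
    β * (k + 1) / 2 ≤ stepSize β k := by
  induction k, hk using Nat.le_induction with
  | base => norm_num; exact le_stepSize_succ β 0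
  | succ k _ ih => push_cast; linarith [stepSize_add_half_le β k]

lemma tendsto_stepSize (hβ : 0 < β) : Tendsto (stepSize β) atTop atTop := by
  have h : Tendsto (fun k : ℕ => β * ((k : ℝ) + 1) / 2) atTop atTop :=
    ((tendsto_natCast_atTop_atTop.atTop_add tendsto_const_nhds).const_mul_atTop hβ).atTop_div_const
      two_pos
  refine tendsto_atTop_mono' _ ?_ h
  filter_upwards [eventually_ge_atTop 1] with k hk
  exact mul_succ_div_two_le_stepSize β hk

lemma div_sq_stepSize_le (hβ : 0 < β) {C : ℝ} (hC : 0 ≤ C) {k : ℕ} (hk : 1 ≤ k) :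
    C / stepSize β k ^ 2 ≤ 4 * C / (β ^ 2 * ((k : ℝ) + 1) ^ 2) := by
  calc C / stepSize β k ^ 2 ≤ C / (β * (k + 1) / 2) ^ 2 := by
        gcongr
        exact mul_succ_div_two_le_stepSize β hk
    _ = 4 * C / (β ^ 2 * ((k : ℝ) + 1) ^ 2) := by field_simp; ring

end StepSize

section ProximalPoint

variable {H : Type*} [NormedAddCommGroup H] [InnerProductSpace ℝ H]

def IsSubgradient (f : H → ℝ) (y g : H) : Prop :=
  ∀ z, f y + ⟪g, z - y⟫ ≤ f z

lemma IsSubgradient.sub_le_inner {f : H → ℝ} {y g : H} (h : IsSubgradient f y g) (u : H) :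
    f y - f u ≤ ⟪g, y - u⟫ := by
  have := h u
  rw [← neg_sub, inner_neg_right] at this
  linarith

/-- `y (k + 1)` is the proximal point of `y k` for `f / μ k`. -/
def IsProximalPointSeq (f : H → ℝ) (μ : ℕ → ℝ) (y : ℕ → H) : Prop :=
  ∀ k, IsSubgradient f (y (k + 1)) (μ k • (y k - y (k + 1)))

variable {f : H → ℝ} {μ : ℕ → ℝ} {y : ℕ → H}

lemma IsProximalPointSeq.of_step {η : ℕ → H} {t : ℕ → ℝ}
    (hsub : ∀ k, IsSubgradient f (y (k + 1)) (η (k + 1))) (ht : ∀ k, t k ≠ 0)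
    (hstep : ∀ k, y (k + 1) = y k - t k • η (k + 1)) :
    IsProximalPointSeq f (fun k => (t k)⁻¹) y := by
  intro k
  rw [show y k - y (k + 1) = t k • η (k + 1) by rw [hstep k, sub_sub_cancel], smul_smul,
    inv_mul_cancel₀ (ht k), one_smul]
  exact hsub k

lemma IsProximalPointSeq.sub_le (h : IsProximalPointSeq f μ y) (u : H) (k : ℕ) :
    f (y (k + 1)) - f u ≤
      μ k / 2 * (‖y k - u‖ ^ 2 - ‖y (k + 1) - u‖ ^ 2 - ‖y k - y (k + 1)‖ ^ 2) := by
  have hsplit := norm_add_sq_real (y k - y (k + 1)) (y (k + 1) - u)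
  rw [sub_add_sub_cancel] at hsplit
  have := (h k).sub_le_inner u
  rw [real_inner_smul_left] at this
  linear_combination this - μ k / 2 * hsplit

lemma IsProximalPointSeq.norm_sub_succ_sq_le (h : IsProximalPointSeq f μ y) (hμ : ∀ k, 0 < μ k)
    {u : H} (hu : ∀ w, f u ≤ f w) (k : ℕ) :
    ‖y (k + 1) - u‖ ^ 2 ≤ ‖y k - u‖ ^ 2 := by
  have := h.sub_le u k
  have := hu (y (k + 1))
  have := hμ k
  nlinarith [sq_nonneg ‖y k - y (k + 1)‖]

lemma IsProximalPointSeq.exists_tendsto_norm_sub (h : IsProximalPointSeq f μ y)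
    (hμ : ∀ k, 0 < μ k) {u : H} (hu : ∀ w, f u ≤ f w) :
    ∃ L, Tendsto (fun k => ‖y k - u‖) atTop (𝓝 L) := by
  have hanti : Antitone fun k => ‖y k - u‖ := antitone_nat_of_succ_le fun k =>
    (pow_le_pow_iff_left₀ (norm_nonneg _) (norm_nonneg _) two_ne_zero).1
      (h.norm_sub_succ_sq_le hμ hu k)
  exact ⟨_, tendsto_atTop_ciInf hanti ⟨0, by rintro _ ⟨k, rfl⟩; positivity⟩⟩

lemma IsProximalPointSeq.tendsto_apply (h : IsProximalPointSeq f μ y) (hμ : ∀ k, 0 < μ k)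
    {M : ℝ} (hμM : ∀ k, μ k ≤ M) {u : H} (hu : ∀ w, f u ≤ f w) :
    Tendsto (fun k => f (y k)) atTop (𝓝 (f u)) := by
  obtain ⟨L, hL⟩ := h.exists_tendsto_norm_sub hμ hu
  have hdiff : Tendsto (fun k => f u + M / 2 * (‖y k - u‖ ^ 2 - ‖y (k + 1) - u‖ ^ 2)) atTop
      (𝓝 (f u)) := by
    simpa using tendsto_const_nhds.add <| ((hL.pow 2).sub
      ((hL.comp (tendsto_add_atTop_nat 1)).pow 2)).const_mul (M / 2)
  refine (tendsto_add_atTop_iff_nat 1).1 <|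
    tendsto_of_tendsto_of_tendsto_of_le_of_le tendsto_const_nhds hdiff (fun k => hu _) fun k => ?_
  have := h.sub_le u k
  have := h.norm_sub_succ_sq_le hμ hu k
  have := hμM k
  have := hμ k
  dsimp only
  nlinarith [sq_nonneg ‖y k - y (k + 1)‖]

theorem IsProximalPointSeq.exists_tendstoWeakly [CompleteSpace H] (hf : ConvexOn ℝ univ f)
    (hf' : LowerSemicontinuous f) (h : IsProximalPointSeq f μ y) (hμ : ∀ k, 0 < μ k) {M : ℝ}
    (hμM : ∀ k, μ k ≤ M) (hmin : ∃ u, ∀ w, f u ≤ f w) :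
    ∃ q, (∀ w, f q ≤ f w) ∧ TendstoWeakly y q := by
  obtain ⟨u, hu⟩ := hmin
  refine exists_tendstoWeakly_of_tendsto_norm_sub (S := {q | ∀ w, f q ≤ f w}) ⟨u, hu⟩
    (fun v hv => h.exists_tendsto_norm_sub hμ hv) fun φ hφ q hq w => ?_
  exact (hq.le_of_tendsto hf hf' ((h.tendsto_apply hμ hμM hu).comp hφ)).trans (hu w)

end ProximalPoint

section AveragedSequence

variable {H : Type*} [NormedAddCommGroup H] [InnerProductSpace ℝ H]
  {f : H → ℝ} {β : ℝ} {x y : ℕ → H}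

def IsAveragedSeq (β : ℝ) (x y : ℕ → H) : Prop :=
  ∀ k, x (k + 1) = (1 - β / stepSize β (k + 1)) • x k + (β / stepSize β (k + 1)) • y (k + 1)

noncomputable def averagedEnergy (f : H → ℝ) (β : ℝ) (x y : ℕ → H) (u : H) (k : ℕ) : ℝ :=
  stepSize β k ^ 2 * (f (x k) - f u) + β ^ 2 / 2 * ‖y k - u‖ ^ 2

lemma IsAveragedSeq.sq_stepSize_smul (hav : IsAveragedSeq β x y) (hβ : 0 < β) (k : ℕ) :
    stepSize β k ^ 2 • x k = ∑ j ∈ Finset.range k, (β * stepSize β (j + 1)) • y (j + 1) := by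
  induction k with
  | zero => simp [stepSize]
  | succ k ih =>
    rw [Finset.sum_range_succ, ← ih, hav k, smul_add, smul_smul, smul_smul,
      sq_stepSize_succ_mul_one_sub hβ, sq_stepSize_succ_mul_div hβ]

lemma IsAveragedSeq.tendstoWeakly (hav : IsAveragedSeq β x y) (hβ : 0 < β) {q : H}
    (hy : TendstoWeakly y q) : TendstoWeakly x q := by
  refine (hy.comp (tendsto_add_atTop_nat 1)).weighted_cesaro
    (w := fun j => β * stepSize β (j + 1)) (fun j => (mul_pos hβ (stepSize_succ_pos hβ j)).le)
    ?_ fun k => ?_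
  · simp only [sum_mul_stepSize]
    exact (tendsto_pow_atTop two_ne_zero).comp (tendsto_stepSize hβ)
  · rw [sum_mul_stepSize]
    exact hav.sq_stepSize_smul hβ k

lemma IsAveragedSeq.sq_stepSize_mul_sub_le (hav : IsAveragedSeq β x y) (hβ : 0 < β)
    (hf : ConvexOn ℝ univ f) (c : ℝ) (k : ℕ) :
    stepSize β (k + 1) ^ 2 * (f (x (k + 1)) - c) ≤
      stepSize β k ^ 2 * (f (x k) - c) + β * stepSize β (k + 1) * (f (y (k + 1)) - c) := by
  have hs := stepSize_succ_pos hβ k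
  have hτ : β / stepSize β (k + 1) ≤ 1 := div_le_one_of_le₀ (le_stepSize_succ β k) hs.le
  have hconv := hf.2 (mem_univ (x k)) (mem_univ (y (k + 1))) (sub_nonneg.2 hτ) (by positivity)
    (sub_add_cancel 1 _)
  rw [← hav k, smul_eq_mul, smul_eq_mul] at hconv
  have hmul := mul_le_mul_of_nonneg_left hconv (sq_nonneg (stepSize β (k + 1)))
  linear_combination hmul + f (x k) * sq_stepSize_succ_mul_one_sub hβ k
    + f (y (k + 1)) * sq_stepSize_succ_mul_div hβ k - c * stepSize_succ_sq β k

lemma IsAveragedSeq.averagedEnergy_succ_le (hav : IsAveragedSeq β x y) (hβ : 0 < β)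
    (hf : ConvexOn ℝ univ f) (hprox : IsProximalPointSeq f (fun k => β / stepSize β (k + 1)) y)
    (u : H) (k : ℕ) : averagedEnergy f β x y u (k + 1) ≤ averagedEnergy f β x y u k := by
  have hs := stepSize_succ_pos hβ k
  have hx := hav.sq_stepSize_mul_sub_le hβ hf (f u) k
  have hy := mul_le_mul_of_nonneg_left (hprox.sub_le u k)
    (by positivity : 0 ≤ β * stepSize β (k + 1))
  have e : β * stepSize β (k + 1) * (β / stepSize β (k + 1) / 2) = β ^ 2 / 2 := by
    field_simp
  rw [← mul_assoc, e] at hy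
  unfold averagedEnergy
  linarith [mul_nonneg (by positivity : (0 : ℝ) ≤ β ^ 2 / 2) (sq_nonneg ‖y k - y (k + 1)‖)]

lemma IsAveragedSeq.averagedEnergy_le (hav : IsAveragedSeq β x y) (hβ : 0 < β)
    (hf : ConvexOn ℝ univ f) (hprox : IsProximalPointSeq f (fun k => β / stepSize β (k + 1)) y)
    (u : H) (k : ℕ) : averagedEnergy f β x y u k ≤ β ^ 2 / 2 * ‖y 0 - u‖ ^ 2 := by
  induction k with
  | zero => simp [averagedEnergy, stepSize]
  | succ k ih => exact (hav.averagedEnergy_succ_le hβ hf hprox u k).trans ih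

lemma IsAveragedSeq.sub_le_div_sq_stepSize (hav : IsAveragedSeq β x y) (hβ : 0 < β)
    (hf : ConvexOn ℝ univ f) (hprox : IsProximalPointSeq f (fun k => β / stepSize β (k + 1)) y)
    (u : H) {k : ℕ} (hk : 1 ≤ k) :
    f (x k) - f u ≤ β ^ 2 / 2 * ‖y 0 - u‖ ^ 2 / stepSize β k ^ 2 := by
  obtain ⟨j, rfl⟩ := Nat.exists_eq_add_of_le' hk
  have hs := stepSize_succ_pos hβ j
  have henergy := hav.averagedEnergy_le hβ hf hprox u (j + 1)
  unfold averagedEnergy at henergy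
  rw [le_div_iff₀ (by positivity), mul_comm]
  linarith [mul_nonneg (by positivity : (0 : ℝ) ≤ β ^ 2 / 2) (sq_nonneg ‖y (j + 1) - u‖)]

end AveragedSequence

/-- Averaged proximal algorithm: O(1/k²) convergence of the values along the averaged
sequence `(x k)` and weak convergence towards a minimizer of `f`. -/
theorem averaged_proximal_algorithm_convergence
    {H : Type*} [NormedAddCommGroup H] [InnerProductSpace ℝ H] [CompleteSpace H]
    (f : H → ℝ)
    (hconv : ConvexOn ℝ Set.univ f)
    (hlsc : LowerSemicontinuous f)
    (hmin : ∃ z, ∀ y, f z ≤ f y)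
    (α : ℝ) (hα : 1 < α)
    (s : ℕ → ℝ) (hs0 : s 0 = 0)
    (hsrec : ∀ k, s (k + 1)
      = (α - 1 + Real.sqrt ((α - 1) ^ 2 + 4 * (s k) ^ 2)) / 2)
    (y η x : ℕ → H)
    (hsub : ∀ k, ∀ z : H, f (y (k + 1)) + ⟪η (k + 1), z - y (k + 1)⟫ ≤ f z)
    (hstep : ∀ k, y (k + 1) = y k - (s (k + 1) / (α - 1)) • η (k + 1))
    (hav : ∀ k, x (k + 1)
      = (1 - (α - 1) / s (k + 1)) • x k + ((α - 1) / s (k + 1)) • y (k + 1)) :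
    (∃ C : ℝ, 0 ≤ C ∧ ∀ k : ℕ, 1 ≤ k →
      f (x k) - (⨅ v, f v) ≤ C / (s k) ^ 2 ∧
      C / (s k) ^ 2 ≤ 4 * C / ((α - 1) ^ 2 * ((k : ℝ) + 1) ^ 2)) ∧
    ∃ xstar : H, (∀ v, f xstar ≤ f v) ∧
      ∀ v : H, Tendsto (fun k => ⟪x k - xstar, v⟫) atTop (nhds 0) := by
  have hβ : 0 < α - 1 := sub_pos.2 hα
  obtain rfl := eq_stepSize hs0 hsrec
  have hprox : IsProximalPointSeq f (fun k => (α - 1) / stepSize (α - 1) (k + 1)) y := by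
    simpa only [inv_div] using IsProximalPointSeq.of_step hsub
      (fun k => (div_pos (stepSize_succ_pos hβ k) hβ).ne') hstep
  obtain ⟨u, hu⟩ := hmin
  have hinf : ⨅ v, f v = f u :=
    IsGLB.ciInf_eq (IsLeast.isGLB ⟨⟨u, rfl⟩, by rintro _ ⟨w, rfl⟩; exact hu w⟩)
  refine ⟨⟨(α - 1) ^ 2 / 2 * ‖y 0 - u‖ ^ 2, by positivity, fun k hk =>
    ⟨hinf ▸ IsAveragedSeq.sub_le_div_sq_stepSize hav hβ hconv hprox u hk,
      div_sq_stepSize_le hβ (by positivity) hk⟩⟩, ?_⟩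
  obtain ⟨q, hq, hyq⟩ := hprox.exists_tendstoWeakly hconv hlsc
    (fun k => div_pos hβ (stepSize_succ_pos hβ k))
    (fun k => div_le_one_of_le₀ (le_stepSize_succ _ k) (stepSize_succ_pos hβ k).le) ⟨u, hu⟩
  refine ⟨q, hq, fun v => ?_⟩
  simpa only [inner_sub_left, sub_self] using
    (IsAveragedSeq.tendstoWeakly hav hβ hyq v).sub_const ⟪q, v⟫
end

section
/- Let M : H → H be a ρ-cocoercive operator (ρ > 0) whose zero set S = {x ∈ H : M(x) = 0} is nonempty. Let t0 > 0 and let z : [t0, ∞) → H be a continuously differentiable solution of ż(t) + M(z(t)) = g(t) for all t ≥ t0, where g : [t0, ∞) → H satisfies ∫_{t0}^∞ ‖g(t)‖ dt < ∞ and ∫_{t0}^∞ t‖g(t)‖² dt < ∞. Then: (i) ‖M(z(t))‖ = o(1/√t) as t → ∞ (i.e., √t·‖M(z(t))‖ → 0); (ii) ∫_{t0}^∞ ‖M(z(t))‖² dt < ∞; (iii) z(t) converges weakly as t → ∞ to some point of S, i.e., there exists x* with M(x*) = 0 such that ⟨z(t) − x*, v⟩ → 0 as t → ∞ for every v ∈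 H. -/
open MeasureTheory Filter Set
open scoped Topology RealInnerProductSpace

/-!
For a zero `p` of `M`, cocoercivity gives `d/dt ‖z - p‖² ≤ 2 ‖g‖ ‖z - p‖ - 2ρ ‖M z‖²`. Since
`‖g‖` is integrable, this yields boundedness of the trajectory, convergence of `‖z t - p‖²`, and
`∫ ‖M z‖² < ∞`. Cocoercivity also makes `‖M (z t)‖² - (2ρ)⁻¹ ∫ ‖g‖²` nonincreasing (checked on
short steps, since `M ∘ z` need not be differentiable); averaging over `[t/2, t]` then gives
`t ‖M (z t)‖² ≤ 2 ∫_{t/2}^t ‖M z‖² + ρ⁻¹ ∫_{t/2}^t u ‖g u‖² → 0`. Weak convergence follows from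
Opial's lemma: weak cluster points are zeros of `M` (demiclosedness), and there is only one of
them because `‖z t - p‖` converges for every zero `p`.
-/

theorem le_of_forall_le_add_mul_sq {ψ : ℝ → ℝ} {C s t : ℝ} (hst : s ≤ t)
    (h : ∀ a b, s ≤ a → a ≤ b → b ≤ t → ψ b ≤ ψ a + C * (b - a) ^ 2) : ψ t ≤ ψ s := by
  -- Cutting `[s, t]` into `n + 1` equal pieces costs `C (t - s)² / (n + 1)`.
  have hsplit : ∀ n : ℕ, ψ t ≤ ψ s + C * (t - s) ^ 2 * (1 / ((n : ℝ) + 1)) := by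
    intro n
    set δ := (t - s) / ((n : ℝ) + 1) with hδ
    have hδ0 : 0 ≤ δ := div_nonneg (sub_nonneg.2 hst) (by positivity)
    have hnδ : ((n : ℝ) + 1) * δ = t - s := by rw [hδ]; field_simp
    have hstep : ∀ k : ℕ, k ≤ n + 1 → ψ (s + k * δ) ≤ ψ s + k * (C * δ ^ 2) := by
      intro k hk
      induction k with
      | zero => simp
      | succ k ih =>
        have hk' : ((k : ℝ) + 1) ≤ (n : ℝ) + 1 := by exact_mod_cast hk
        have hnext := h (s + k * δ) (s + (k + 1 : ℕ) * δ) (by nlinarith)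
          (by push_cast; nlinarith) (by push_cast; nlinarith)
        have hdiff : s + ((k + 1 : ℕ) : ℝ) * δ - (s + k * δ) = δ := by push_cast; ring
        rw [hdiff] at hnext
        push_cast at hnext ⊢
        linarith [ih (by omega)]
    have hlast := hstep (n + 1) le_rfl
    have hend : s + ((n + 1 : ℕ) : ℝ) * δ = t := by push_cast; linarith
    rw [hend] at hlast
    calc ψ t ≤ ψ s + ((n : ℝ) + 1) * (C * δ ^ 2) := by exact_mod_cast hlast
      _ = ψ s + C * (t - s) ^ 2 * (1 / ((n : ℝ) + 1)) := by
        rw [← hnδ]; field_simp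
  have hlim : Tendsto (fun n : ℕ => ψ s + C * (t - s) ^ 2 * (1 / ((n : ℝ) + 1))) atTop
      (𝓝 (ψ s)) := by
    simpa using tendsto_const_nhds.add
      (tendsto_one_div_add_atTop_nhds_zero_nat.const_mul (C * (t - s) ^ 2))
  exact ge_of_tendsto' hlim hsplit

theorem intervalIntegrable_of_integrableOn_Ioi {E : Type*} [NormedAddCommGroup E]
    {f : ℝ → E} {a b : ℝ} (hf : IntegrableOn f (Ioi a)) (hab : a ≤ b) :
    IntervalIntegrable f volume a b :=
  (intervalIntegrable_iff_integrableOn_Ioc_of_le hab).2 (hf.mono_set Ioc_subset_Ioi_self)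

theorem intervalIntegral_le_integral_Ioi {f : ℝ → ℝ} {a b : ℝ} (hf : IntegrableOn f (Ioi a))
    (hf0 : ∀ x > a, 0 ≤ f x) (hab : a ≤ b) : ∫ x in a..b, f x ≤ ∫ x in Ioi a, f x := by
  rw [intervalIntegral.integral_of_le hab]
  exact setIntegral_mono_set hf ((ae_restrict_iff' measurableSet_Ioi).2 (ae_of_all _ hf0))
    (Ioc_subset_Ioi_self.eventuallyLE)

theorem tendsto_intervalIntegral_zero_of_integrableOn_Ioi {E : Type*} [NormedAddCommGroup E]
    [NormedSpace ℝ E] {ι : Type*} {l : Filter ι} [l.IsCountablyGenerated] {f : ℝ → E} {a : ℝ}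
    (hf : IntegrableOn f (Ioi a)) {b c : ι → ℝ} (hb : Tendsto b l atTop)
    (hc : Tendsto c l atTop) : Tendsto (fun i => ∫ x in b i..c i, f x) l (𝓝 0) := by
  have hlim := (intervalIntegral_tendsto_integral_Ioi a hf hc).sub
    (intervalIntegral_tendsto_integral_Ioi a hf hb)
  rw [sub_self] at hlim
  refine hlim.congr' ?_
  filter_upwards [hb.eventually_ge_atTop a, hc.eventually_ge_atTop a] with i hbi hci
  exact intervalIntegral.integral_interval_sub_left (intervalIntegrable_of_integrableOn_Ioi hf hci)
    (intervalIntegrable_of_integrableOn_Ioi hf hbi)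

theorem integrableOn_Ici_of_intervalIntegral_le {f : ℝ → ℝ} {a C : ℝ}
    (hf : ContinuousOn f (Ici a)) (hf0 : ∀ x ≥ a, 0 ≤ f x)
    (hC : ∀ b ≥ a, ∫ x in a..b, f x ≤ C) : IntegrableOn f (Ici a) := by
  rw [integrableOn_Ici_iff_integrableOn_Ioi]
  refine integrableOn_Ioi_of_intervalIntegral_norm_bounded C a
    (fun b => (hf.mono Icc_subset_Ici_self).integrableOn_Icc.mono_set Ioc_subset_Icc_self)
    tendsto_id ?_
  filter_upwards [eventually_ge_atTop a] with b hb
  rw [id, intervalIntegral.integral_congr fun x hx => Real.norm_of_nonneg (hf0 x ?_)]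
  · exact hC b hb
  · rw [uIcc_of_le hb] at hx; exact hx.1

theorem exists_tendsto_of_le_add_intervalIntegral {q h : ℝ → ℝ} {a : ℝ}
    (hq : BddBelow (q '' Ici a)) (hh : IntegrableOn h (Ioi a)) (hh0 : ∀ x > a, 0 ≤ h x)
    (hle : ∀ s t, a ≤ s → s ≤ t → q t ≤ q s + ∫ u in s..t, h u) :
    ∃ L, Tendsto q atTop (𝓝 L) := by
  set F := fun t => ∫ u in a..t, h u
  set ψ := fun t => q (max t a) - F (max t a)
  have hψ : Antitone ψ := by
    intro s t hst
    have hs : a ≤ max s a := le_max_right s a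
    have hst' : max s a ≤ max t a := max_le_max hst le_rfl
    have hF := intervalIntegral.integral_interval_sub_left
      (intervalIntegrable_of_integrableOn_Ioi hh (hs.trans hst'))
      (intervalIntegrable_of_integrableOn_Ioi hh hs)
    linarith [hle _ _ hs hst']
  obtain ⟨m, hm⟩ := hq
  have hψb : BddBelow (range ψ) := by
    refine ⟨m - ∫ u in Ioi a, h u, ?_⟩
    rintro _ ⟨t, rfl⟩
    linarith [hm ⟨max t a, le_max_right t a, rfl⟩,
      intervalIntegral_le_integral_Ioi hh hh0 (le_max_right t a)]
  refine ⟨_, ((tendsto_atTop_ciInf hψ hψb).add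
    (intervalIntegral_tendsto_integral_Ioi a hh tendsto_id)).congr' ?_⟩
  filter_upwards [eventually_ge_atTop a] with t ht
  simp [ψ, F, max_eq_left ht]

theorem ContinuousOn.intervalIntegrable_of_Ici {E : Type*} [NormedAddCommGroup E] {f : ℝ → E}
    {t0 a b : ℝ} (hf : ContinuousOn f (Ici t0)) (ha : t0 ≤ a) (hb : t0 ≤ b) :
    IntervalIntegrable f volume a b :=
  (hf.mono fun _ hx => (le_inf ha hb).trans hx.1).intervalIntegrable

theorem mul_le_mul_sq_add_inv_mul_sq {c : ℝ} (hc : 0 < c) (x y : ℝ) :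
    x * y ≤ c * x ^ 2 + (4 * c)⁻¹ * y ^ 2 := by
  have hsq : 0 ≤ (2 * c * x - y) ^ 2 / (4 * c) := by positivity
  have hexp : (2 * c * x - y) ^ 2 / (4 * c) = c * x ^ 2 + (4 * c)⁻¹ * y ^ 2 - x * y := by
    field_simp
    ring
  linarith

theorem tendsto_zero_of_tendsto_sqrt_mul {f : ℝ → ℝ} (hf : ∀ t, 0 ≤ f t)
    (h : Tendsto (fun t => √t * f t) atTop (𝓝 0)) : Tendsto f atTop (𝓝 0) := by
  refine squeeze_zero' (Eventually.of_forall hf) ?_ h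
  filter_upwards [eventually_ge_atTop 1] with t ht
  exact le_mul_of_one_le_left (hf t) (Real.one_le_sqrt.2 ht)

section Hilbert

variable {H : Type*} [NormedAddCommGroup H] [InnerProductSpace ℝ H]

def IsCocoercive (M : H → H) (ρ : ℝ) : Prop :=
  ∀ x y : H, ρ * ‖M x - M y‖ ^ 2 ≤ ⟪M x - M y, x - y⟫

def WeakTendsto {α : Type*} (x : α → H) (l : Filter α) (y : H) : Prop :=
  ∀ v : H, Tendsto (fun t => ⟪x t, v⟫) l (𝓝 ⟪y, v⟫)

namespace IsCocoercive

variable {M : H → H} {ρ : ℝ}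

theorem mul_norm_sub_le (hM : IsCocoercive M ρ) (x y : H) : ρ * ‖M x - M y‖ ≤ ‖x - y‖ := by
  have h := (hM x y).trans (real_inner_le_norm _ _)
  rcases (norm_nonneg (M x - M y)).eq_or_lt with h0 | h0
  · rw [← h0, mul_zero]; exact norm_nonneg _
  · exact le_of_mul_le_mul_right (by linarith) h0

theorem norm_sub_le (hM : IsCocoercive M ρ) (hρ : 0 < ρ) (x y : H) :
    ‖M x - M y‖ ≤ ρ⁻¹ * ‖x - y‖ := by
  rw [inv_mul_eq_div, le_div_iff₀' hρ]; exact hM.mul_norm_sub_le x y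

theorem continuous (hM : IsCocoercive M ρ) (hρ : 0 < ρ) : Continuous M :=
  (LipschitzWith.of_dist_le_mul fun x y => by
    rw [dist_eq_norm, dist_eq_norm, Real.coe_toNNReal _ (inv_nonneg.2 hρ.le)]
    exact hM.norm_sub_le hρ x y).continuous

theorem mul_norm_sq_le_inner {p : H} (hM : IsCocoercive M ρ) (hp : M p = 0) (x : H) :
    ρ * ‖M x‖ ^ 2 ≤ ⟪M x, x - p⟫ := by
  simpa [hp] using hM x p

theorem apply_eq_zero_of_weakTendsto {α : Type*} {l : Filter α} [l.NeBot] {x : α → H} {y : H}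
    {R : ℝ} (hM : IsCocoercive M ρ) (hρ : 0 < ρ) (hx : ∀ᶠ t in l, ‖x t‖ ≤ R)
    (hMx : Tendsto (fun t => M (x t)) l (𝓝 0)) (hxy : WeakTendsto x l y) : M y = 0 := by
  have hlhs : Tendsto (fun t => ρ * ‖M (x t) - M y‖ ^ 2) l (𝓝 (ρ * ‖M y‖ ^ 2)) := by
    simpa using ((hMx.sub_const (M y)).norm.pow 2).const_mul ρ
  have hnorm : Tendsto (fun t => ‖M (x t)‖ * (R + ‖y‖)) l (𝓝 0) := by
    simpa using (tendsto_norm_zero.comp hMx).mul_const (R + ‖y‖)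
  have hfirst : Tendsto (fun t => ⟪M (x t), x t - y⟫) l (𝓝 0) := by
    refine squeeze_zero_norm' ?_ hnorm
    filter_upwards [hx] with t ht
    calc ‖⟪M (x t), x t - y⟫‖ ≤ ‖M (x t)‖ * ‖x t - y‖ := norm_inner_le_norm _ _
      _ ≤ ‖M (x t)‖ * (R + ‖y‖) := by gcongr; exact (_root_.norm_sub_le _ _).trans (by linarith)
  have hrhs : Tendsto (fun t => ⟪M (x t) - M y, x t - y⟫) l (𝓝 0) := by
    have h := (hfirst.sub ((hxy (M y)).sub_const ⟪y, M y⟫))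
    rw [sub_self, sub_zero] at h
    refine h.congr fun t => ?_
    rw [inner_sub_left _ _ (x t - y), inner_sub_right (M y), real_inner_comm (M y),
      real_inner_comm (M y)]
  have hle : ρ * ‖M y‖ ^ 2 ≤ 0 := le_of_tendsto_of_tendsto' hlhs hrhs fun t => hM (x t) y
  have : ‖M y‖ ^ 2 = 0 := le_antisymm (nonpos_of_mul_nonpos_right hle hρ) (sq_nonneg _)
  simpa using this

end IsCocoercive

theorem WeakTendsto.eq_of_tendsto_norm_sub_sq {α : Type*} {l F₁ F₂ : Filter α} [F₁.NeBot]
    [F₂.NeBot] {x : α → H} {y₁ y₂ : H} {L₁ L₂ : ℝ} (hy₁ : WeakTendsto x F₁ y₁)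
    (hy₂ : WeakTendsto x F₂ y₂) (hF₁ : F₁ ≤ l) (hF₂ : F₂ ≤ l)
    (hL₁ : Tendsto (fun t => ‖x t - y₁‖ ^ 2) l (𝓝 L₁))
    (hL₂ : Tendsto (fun t => ‖x t - y₂‖ ^ 2) l (𝓝 L₂)) : y₁ = y₂ := by
  -- `⟪x t, y₂ - y₁⟫` is an affine combination of the two converging squared distances.
  have hlim : Tendsto (fun t => ⟪x t, y₂ - y₁⟫) l
      (𝓝 ((L₁ - L₂ + (‖y₂‖ ^ 2 - ‖y₁‖ ^ 2)) / 2)) := by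
    refine (((hL₁.sub hL₂).add_const (‖y₂‖ ^ 2 - ‖y₁‖ ^ 2)).div_const 2).congr fun t => ?_
    rw [norm_sub_sq_real, norm_sub_sq_real, inner_sub_right]
    ring
  have h₁ := tendsto_nhds_unique (hy₁ (y₂ - y₁)) (hlim.mono_left hF₁)
  have h₂ := tendsto_nhds_unique (hy₂ (y₂ - y₁)) (hlim.mono_left hF₂)
  have : ⟪y₂ - y₁, y₂ - y₁⟫ = 0 := by rw [inner_sub_left, h₁, h₂, sub_self]
  exact (sub_eq_zero.1 (inner_self_eq_zero.1 this)).symm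

variable [CompleteSpace H]

-- Banach–Alaoglu, transported to `H` by the Riesz isomorphism.
theorem exists_weakTendsto_of_ultrafilter {α : Type*} (U : Ultrafilter α) {x : α → H} {R : ℝ}
    (hx : ∀ᶠ t in U, ‖x t‖ ≤ R) : ∃ y : H, WeakTendsto x U y := by
  let D := InnerProductSpace.toDual ℝ H
  let Φ : α → WeakDual ℝ H := fun t => StrongDual.toWeakDual (D (x t))
  have hK := WeakDual.isCompact_closedBall (𝕜 := ℝ) (E := H) 0 R
  have hUK : ((U.map Φ : Ultrafilter (WeakDual ℝ H)) : Filter (WeakDual ℝ H)) ≤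
      𝓟 (WeakDual.toStrongDual ⁻¹' Metric.closedBall 0 R) := by
    rw [Ultrafilter.coe_map, le_principal_iff, mem_map]
    filter_upwards [hx] with t ht
    simpa [Φ, D] using ht
  obtain ⟨φ, -, hφ⟩ := hK.ultrafilter_le_nhds _ hUK
  refine ⟨D.symm (WeakDual.toStrongDual φ), fun v => ?_⟩
  have hv : Tendsto (fun t => Φ t v) U (𝓝 (φ v)) :=
    ((WeakDual.eval_continuous v).tendsto φ).comp hφ
  convert hv using 2
  · exact InnerProductSpace.toDual_apply_apply.symm
  · rw [← InnerProductSpace.toDual_apply_apply (𝕜 := ℝ), LinearIsometryEquiv.apply_symm_apply]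
    rfl

-- Opial's lemma.
theorem exists_mem_weakTendsto_of_tendsto_norm_sub_sq {α : Type*} {l : Filter α} [l.NeBot]
    {x : α → H} {S : Set H} {R : ℝ} (hx : ∀ᶠ t in l, ‖x t‖ ≤ R)
    (hS : ∀ p ∈ S, ∃ L, Tendsto (fun t => ‖x t - p‖ ^ 2) l (𝓝 L))
    (hcl : ∀ (U : Ultrafilter α) (y : H), ↑U ≤ l → WeakTendsto x U y → y ∈ S) :
    ∃ y ∈ S, WeakTendsto x l y := by
  have hlim : ∀ U : Ultrafilter α, ↑U ≤ l → ∃ y ∈ S, WeakTendsto x U y := fun U hU =>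
    let ⟨y, hy⟩ := exists_weakTendsto_of_ultrafilter U (hx.filter_mono hU)
    ⟨y, hcl U y hU hy, hy⟩
  obtain ⟨y₀, hy₀S, hy₀⟩ := hlim (Ultrafilter.of l) (Ultrafilter.of_le l)
  refine ⟨y₀, hy₀S, fun v => (tendsto_iff_ultrafilter _ _ _).2 fun U hU => ?_⟩
  obtain ⟨y, hyS, hy⟩ := hlim U hU
  obtain ⟨L, hL⟩ := hS y hyS
  obtain ⟨L₀, hL₀⟩ := hS y₀ hy₀S
  rw [← hy.eq_of_tendsto_norm_sub_sq hy₀ hU (Ultrafilter.of_le l) hL hL₀]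
  exact hy v

end Hilbert

section Dynamics

variable {H : Type*} [NormedAddCommGroup H] [InnerProductSpace ℝ H]

structure IsPerturbedSolution (M : H → H) (t0 : ℝ) (z z' g : ℝ → H) : Prop where
  hasDerivAt : ∀ t ∈ Ici t0, HasDerivAt z (z' t) t
  continuousOn_deriv : ContinuousOn z' (Ici t0)
  deriv_add_apply : ∀ t ∈ Ici t0, z' t + M (z t) = g t

namespace IsPerturbedSolution

variable {M : H → H} {ρ t0 : ℝ} {z z' g : ℝ → H} {p : H}

theorem continuousOn (hz : IsPerturbedSolution M t0 z z' g) : ContinuousOn z (Ici t0) :=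
  fun t ht => (hz.hasDerivAt t ht).continuousAt.continuousWithinAt

theorem continuousOn_apply (hz : IsPerturbedSolution M t0 z z' g) (hM : Continuous M) :
    ContinuousOn (fun t => M (z t)) (Ici t0) :=
  hM.comp_continuousOn hz.continuousOn

theorem continuousOn_forcing (hz : IsPerturbedSolution M t0 z z' g) (hM : Continuous M) :
    ContinuousOn g (Ici t0) :=
  (hz.continuousOn_deriv.add (hz.continuousOn_apply hM)).congr fun t ht =>
    (hz.deriv_add_apply t ht).symm

theorem two_inner_add_le (hz : IsPerturbedSolution M t0 z z' g) (hM : IsCocoercive M ρ)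
    (hp : M p = 0) {t : ℝ} (ht : t ∈ Ici t0) :
    2 * ⟪z t - p, z' t⟫ + 2 * ρ * ‖M (z t)‖ ^ 2 ≤ 2 * (‖g t‖ * ‖z t - p‖) := by
  rw [eq_sub_of_add_eq (hz.deriv_add_apply t ht), inner_sub_right,
    real_inner_comm (g t) (z t - p), real_inner_comm (M (z t)) (z t - p)]
  linarith [hM.mul_norm_sq_le_inner hp (z t), real_inner_le_norm (g t) (z t - p)]

theorem norm_sub_sq_add_integral_le (hz : IsPerturbedSolution M t0 z z' g)
    (hM : IsCocoercive M ρ) (hρ : 0 < ρ) (hp : M p = 0) {a b C : ℝ} (ha : t0 ≤ a) (hab : a ≤ b)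
    (hC : ∀ u ∈ Icc a b, ‖z u - p‖ ≤ C) :
    ‖z b - p‖ ^ 2 + 2 * ρ * ∫ u in a..b, ‖M (z u)‖ ^ 2 ≤
      ‖z a - p‖ ^ 2 + 2 * C * ∫ u in a..b, ‖g u‖ := by
  have hb := ha.trans hab
  have hinner : ContinuousOn (fun u => 2 * ⟪z u - p, z' u⟫) (Ici t0) :=
    continuousOn_const.mul ((hz.continuousOn.sub continuousOn_const).inner hz.continuousOn_deriv)
  have hMz : ContinuousOn (fun u => 2 * ρ * ‖M (z u)‖ ^ 2) (Ici t0) :=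
    continuousOn_const.mul ((hz.continuousOn_apply (hM.continuous hρ)).norm.pow 2)
  have hg : ContinuousOn (fun u => 2 * C * ‖g u‖) (Ici t0) :=
    continuousOn_const.mul (hz.continuousOn_forcing (hM.continuous hρ)).norm
  have hftc : ∫ u in a..b, 2 * ⟪z u - p, z' u⟫ = ‖z b - p‖ ^ 2 - ‖z a - p‖ ^ 2 :=
    intervalIntegral.integral_eq_sub_of_hasDerivAt
      (fun u hu => ((hz.hasDerivAt u ((le_inf ha hb).trans hu.1)).sub_const p).norm_sq)
      (hinner.intervalIntegrable_of_Ici ha hb)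
  have hmono := intervalIntegral.integral_mono_on hab
    ((hinner.intervalIntegrable_of_Ici ha hb).add (hMz.intervalIntegrable_of_Ici ha hb))
    (hg.intervalIntegrable_of_Ici ha hb)
    fun u hu => (hz.two_inner_add_le hM hp (ha.trans hu.1)).trans
      (by nlinarith [hC u hu, norm_nonneg (g u)])
  rw [intervalIntegral.integral_add (hinner.intervalIntegrable_of_Ici ha hb)
    (hMz.intervalIntegrable_of_Ici ha hb), hftc, intervalIntegral.integral_const_mul,
    intervalIntegral.integral_const_mul] at hmono
  linarith

theorem norm_sub_le (hz : IsPerturbedSolution M t0 z z' g) (hM : IsCocoercive M ρ)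
    (hρ : 0 < ρ) (hp : M p = 0) (hg : IntegrableOn (fun t => ‖g t‖) (Ioi t0)) {t : ℝ}
    (ht : t0 ≤ t) : ‖z t - p‖ ≤ ‖z t0 - p‖ + 2 * ∫ u in Ioi t0, ‖g u‖ := by
  obtain ⟨t₁, ht₁, hmax⟩ := isCompact_Icc.exists_isMaxOn (nonempty_Icc.2 ht)
    ((hz.continuousOn.mono Icc_subset_Ici_self).sub continuousOn_const).norm
  have hE := hz.norm_sub_sq_add_integral_le hM hρ hp le_rfl ht₁.1 (C := ‖z t₁ - p‖)
    fun u hu => hmax ⟨hu.1, hu.2.trans ht₁.2⟩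
  have hI := intervalIntegral_le_integral_Ioi hg (fun _ _ => norm_nonneg _) ht₁.1
  have hI0 : 0 ≤ ∫ u in t0..t₁, ‖g u‖ :=
    intervalIntegral.integral_nonneg ht₁.1 fun _ _ => norm_nonneg _
  have hMz : 0 ≤ ∫ u in t0..t₁, ‖M (z u)‖ ^ 2 :=
    intervalIntegral.integral_nonneg ht₁.1 fun _ _ => sq_nonneg _
  -- `A := max ‖z - p‖` on `[t0, t]` satisfies `A² ≤ ‖z t0 - p‖² + 2 A ∫ ‖g‖`.
  have hA : ‖z t₁ - p‖ ≤ ‖z t0 - p‖ + 2 * ∫ u in Ioi t0, ‖g u‖ := by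
    by_contra! hlt
    nlinarith [norm_nonneg (z t0 - p), mul_le_mul_of_nonneg_left hI (norm_nonneg (z t₁ - p))]
  exact (hmax ⟨ht, le_rfl⟩).trans hA

theorem integrableOn_norm_sq (hz : IsPerturbedSolution M t0 z z' g) (hM : IsCocoercive M ρ)
    (hρ : 0 < ρ) (hp : M p = 0) (hg : IntegrableOn (fun t => ‖g t‖) (Ioi t0)) :
    IntegrableOn (fun t => ‖M (z t)‖ ^ 2) (Ici t0) := by
  set C := ‖z t0 - p‖ + 2 * ∫ u in Ioi t0, ‖g u‖
  refine integrableOn_Ici_of_intervalIntegral_le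
    ((hz.continuousOn_apply (hM.continuous hρ)).norm.pow 2) (fun _ _ => sq_nonneg _)
    (C := (‖z t0 - p‖ ^ 2 + 2 * C * ∫ u in Ioi t0, ‖g u‖) / (2 * ρ)) fun b hb => ?_
  have hE := hz.norm_sub_sq_add_integral_le hM hρ hp le_rfl hb
    fun u hu => hz.norm_sub_le hM hρ hp hg hu.1
  have hI := intervalIntegral_le_integral_Ioi hg (fun _ _ => norm_nonneg _) hb
  rw [le_div_iff₀' (by positivity)]
  nlinarith [sq_nonneg ‖z b - p‖, mul_le_mul_of_nonneg_left hI (by positivity : 0 ≤ 2 * C)]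

theorem exists_tendsto_norm_sub_sq (hz : IsPerturbedSolution M t0 z z' g)
    (hM : IsCocoercive M ρ) (hρ : 0 < ρ) (hp : M p = 0)
    (hg : IntegrableOn (fun t => ‖g t‖) (Ioi t0)) :
    ∃ L, Tendsto (fun t => ‖z t - p‖ ^ 2) atTop (𝓝 L) := by
  set C := ‖z t0 - p‖ + 2 * ∫ u in Ioi t0, ‖g u‖
  refine exists_tendsto_of_le_add_intervalIntegral (a := t0) (h := fun u => 2 * C * ‖g u‖)
    ⟨0, ?_⟩ (hg.const_mul _) (fun _ _ => by positivity) fun s t hs hst => ?_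
  · rintro _ ⟨t, -, rfl⟩
    exact sq_nonneg _
  · have hE := hz.norm_sub_sq_add_integral_le hM hρ hp hs hst
      fun u hu => hz.norm_sub_le hM hρ hp hg (hs.trans hu.1)
    have hMz : 0 ≤ ∫ u in s..t, ‖M (z u)‖ ^ 2 :=
      intervalIntegral.integral_nonneg hst fun _ _ => sq_nonneg _
    rw [intervalIntegral.integral_const_mul]
    nlinarith

theorem integral_inner_sub_apply (hz : IsPerturbedSolution M t0 z z' g) (hM : Continuous M)
    (v : H) {a b : ℝ} (ha : t0 ≤ a) (hb : t0 ≤ b) :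
    ∫ u in a..b, ⟪v, g u - M (z u)⟫ = ⟪v, z b - z a⟫ := by
  rw [inner_sub_right]
  refine intervalIntegral.integral_eq_sub_of_hasDerivAt (f := fun u => ⟪v, z u⟫)
    (fun u hu => ?_) ((continuousOn_const.inner ((hz.continuousOn_forcing hM).sub
      (hz.continuousOn_apply hM))).intervalIntegrable_of_Ici ha hb)
  have hu : u ∈ Ici t0 := (le_inf ha hb).trans hu.1
  rw [← eq_sub_of_add_eq (hz.deriv_add_apply u hu)]
  simpa using (hasDerivAt_const u v).inner ℝ (hz.hasDerivAt u hu)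

theorem inner_sub_apply_le (hz : IsPerturbedSolution M t0 z z' g) (hM : IsCocoercive M ρ)
    (hρ : 0 < ρ) {a b K : ℝ} (ha : t0 ≤ a) (hab : a < b)
    (hK : ∀ u ∈ Icc a b, ‖M (z u) - M (z a)‖ ≤ K * (u - a)) :
    ⟪M (z b) - M (z a), M (z a)⟫ ≤
      (4 * ρ)⁻¹ * (∫ u in a..b, ‖g u‖ ^ 2) + K * (b - a) * ‖M (z b) - M (z a)‖ := by
  set δ := b - a
  have hδ : 0 < δ := sub_pos.2 hab
  set Δ := M (z b) - M (z a)
  have hK0 : 0 ≤ K := nonneg_of_mul_nonneg_left ((norm_nonneg _).trans (hK b ⟨hab.le, le_rfl⟩)) hδ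
  have hb : t0 ≤ b := ha.trans hab.le
  have hg := hz.continuousOn_forcing (hM.continuous hρ)
  have hinner : ContinuousOn (fun u => ⟪Δ, g u - M (z u)⟫) (Ici t0) :=
    continuousOn_const.inner (hg.sub (hz.continuousOn_apply (hM.continuous hρ)))
  have hg2 : IntervalIntegrable (fun u => ‖g u‖ ^ 2) volume a b :=
    (hg.norm.pow 2).intervalIntegrable_of_Ici ha hb
  -- Freeze `M (z u)` at `u = a` up to `K δ`, and split `⟪Δ, g u⟫` by Young's inequality.
  have hpt : ∀ u ∈ Icc a b, ⟪Δ, g u - M (z u)⟫ ≤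
      (ρ / δ * ‖Δ‖ ^ 2 - ⟪Δ, M (z a)⟫ + K * δ * ‖Δ‖) + (4 * (ρ / δ))⁻¹ * ‖g u‖ ^ 2 := by
    intro u hu
    have hfreeze : ‖M (z u) - M (z a)‖ ≤ K * δ :=
      (hK u hu).trans (mul_le_mul_of_nonneg_left (by linarith [hu.2]) hK0)
    rw [show g u - M (z u) = g u - M (z a) - (M (z u) - M (z a)) by abel, inner_sub_right,
      inner_sub_right]
    nlinarith [real_inner_le_norm Δ (g u), mul_le_mul_sq_add_inv_mul_sq (div_pos hρ hδ) ‖Δ‖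
      ‖g u‖, neg_le_of_abs_le (abs_real_inner_le_norm Δ (M (z u) - M (z a))),
      mul_le_mul_of_nonneg_left hfreeze (norm_nonneg Δ)]
  have hint := intervalIntegral.integral_mono_on hab.le (hinner.intervalIntegrable_of_Ici ha hb)
    (intervalIntegrable_const.add (hg2.const_mul _)) hpt
  rw [hz.integral_inner_sub_apply (hM.continuous hρ) Δ ha hb,
    intervalIntegral.integral_add intervalIntegrable_const (hg2.const_mul _),
    intervalIntegral.integral_const, intervalIntegral.integral_const_mul, smul_eq_mul,
    show b - a = δ from rfl] at hint
  -- After integration, cocoercivity `ρ ‖Δ‖² ≤ ⟪Δ, z b - z a⟫` cancels the `ρ ‖Δ‖²` term.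
  have hexp : δ * (ρ / δ * ‖Δ‖ ^ 2 - ⟪Δ, M (z a)⟫ + K * δ * ‖Δ‖) +
      (4 * (ρ / δ))⁻¹ * ∫ u in a..b, ‖g u‖ ^ 2 = ρ * ‖Δ‖ ^ 2 +
        δ * ((4 * ρ)⁻¹ * (∫ u in a..b, ‖g u‖ ^ 2) + K * δ * ‖Δ‖ - ⟪Δ, M (z a)⟫) := by
    field_simp
    ring
  have : 0 ≤ (4 * ρ)⁻¹ * (∫ u in a..b, ‖g u‖ ^ 2) + K * δ * ‖Δ‖ - ⟪Δ, M (z a)⟫ :=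
    nonneg_of_mul_nonneg_right (by linarith [hM (z b) (z a)]) hδ
  linarith

theorem norm_sq_le_add_integral_add_sq (hz : IsPerturbedSolution M t0 z z' g)
    (hM : IsCocoercive M ρ) (hρ : 0 < ρ) {a b K : ℝ} (ha : t0 ≤ a) (hab : a ≤ b)
    (hK : ∀ u ∈ Icc a b, ‖M (z u) - M (z a)‖ ≤ K * (u - a)) :
    ‖M (z b)‖ ^ 2 ≤
      ‖M (z a)‖ ^ 2 + (2 * ρ)⁻¹ * (∫ u in a..b, ‖g u‖ ^ 2) + 3 * K ^ 2 * (b - a) ^ 2 := by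
  rcases hab.eq_or_lt with rfl | hab
  · simp
  have hcross := hz.inner_sub_apply_le hM hρ ha hab hK
  have hΔ : ‖M (z b) - M (z a)‖ ≤ K * (b - a) := hK b ⟨hab.le, le_rfl⟩
  have hKδ : 0 ≤ K * (b - a) := (norm_nonneg _).trans hΔ
  have hhalf : (2 * ρ)⁻¹ = 2 * (4 * ρ)⁻¹ := by field_simp; norm_num
  rw [← add_sub_cancel (M (z a)) (M (z b)), norm_add_sq_real, real_inner_comm, hhalf]
  nlinarith [mul_le_mul_of_nonneg_left hΔ (norm_nonneg (M (z b) - M (z a))),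
    mul_le_mul_of_nonneg_left hΔ hKδ]

theorem norm_sq_le_add_integral (hz : IsPerturbedSolution M t0 z z' g) (hM : IsCocoercive M ρ)
    (hρ : 0 < ρ) {s t : ℝ} (hs : t0 ≤ s) (hst : s ≤ t) :
    ‖M (z t)‖ ^ 2 ≤ ‖M (z s)‖ ^ 2 + (2 * ρ)⁻¹ * ∫ u in s..t, ‖g u‖ ^ 2 := by
  obtain ⟨B, hB⟩ := isCompact_Icc.exists_bound_of_continuousOn
    (hz.continuousOn_deriv.mono ((Icc_subset_Ici_iff hst).2 hs))
  have hLip : ∀ a ∈ Icc s t, ∀ u ∈ Icc a t, ‖M (z u) - M (z a)‖ ≤ ρ⁻¹ * B * (u - a) := by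
    intro a ha u hu
    have hzu := norm_image_sub_le_of_norm_deriv_le_segment'
      (fun v hv => (hz.hasDerivAt v (hs.trans (ha.1.trans hv.1))).hasDerivWithinAt)
      (fun v hv => hB v ⟨ha.1.trans hv.1, hv.2.le⟩) u hu
    calc ‖M (z u) - M (z a)‖ ≤ ρ⁻¹ * ‖z u - z a‖ := hM.norm_sub_le hρ _ _
      _ ≤ ρ⁻¹ * (B * (u - a)) := by gcongr
      _ = ρ⁻¹ * B * (u - a) := by ring
  have hg2 : ContinuousOn (fun u => ‖g u‖ ^ 2) (Ici t0) :=
    (hz.continuousOn_forcing (hM.continuous hρ)).norm.pow 2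
  -- `‖M (z ·)‖² - (2ρ)⁻¹ ∫ ‖g‖²` decreases up to a second-order error, hence decreases.
  have key := le_of_forall_le_add_mul_sq (C := 3 * (ρ⁻¹ * B) ^ 2)
    (ψ := fun u => ‖M (z u)‖ ^ 2 - (2 * ρ)⁻¹ * ∫ v in s..u, ‖g v‖ ^ 2) hst
    fun a b ha hab hb => by
      have hstep := hz.norm_sq_le_add_integral_add_sq hM hρ (hs.trans ha) hab
        fun u hu => hLip a ⟨ha, hab.trans hb⟩ u ⟨hu.1, hu.2.trans hb⟩
      have hsplit : (2 * ρ)⁻¹ * (∫ v in s..b, ‖g v‖ ^ 2) - (2 * ρ)⁻¹ * ∫ v in s..a, ‖g v‖ ^ 2 =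
          (2 * ρ)⁻¹ * ∫ v in a..b, ‖g v‖ ^ 2 := by
        rw [← mul_sub, intervalIntegral.integral_interval_sub_left
          (hg2.intervalIntegrable_of_Ici hs (hs.trans (ha.trans hab)))
          (hg2.intervalIntegrable_of_Ici hs (hs.trans ha))]
      linarith
  simpa using key

theorem mul_norm_sq_le (hz : IsPerturbedSolution M t0 z z' g) (hM : IsCocoercive M ρ)
    (hρ : 0 < ρ) {t : ℝ} (ht0 : t0 ≤ t / 2) (ht : 0 ≤ t) :
    t * ‖M (z t)‖ ^ 2 ≤
      2 * (∫ u in t / 2..t, ‖M (z u)‖ ^ 2) + ρ⁻¹ * ∫ u in t / 2..t, u * ‖g u‖ ^ 2 := by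
  have hht : t / 2 ≤ t := by linarith
  have hg := hz.continuousOn_forcing (hM.continuous hρ)
  have hg2 : IntervalIntegrable (fun u => ‖g u‖ ^ 2) volume (t / 2) t :=
    (hg.norm.pow 2).intervalIntegrable_of_Ici ht0 (ht0.trans hht)
  have hMz2 : IntervalIntegrable (fun u => ‖M (z u)‖ ^ 2) volume (t / 2) t :=
    ((hz.continuousOn_apply (hM.continuous hρ)).norm.pow 2).intervalIntegrable_of_Ici ht0
      (ht0.trans hht)
  set G := ∫ u in t / 2..t, ‖g u‖ ^ 2
  have hpt : ∀ s ∈ Icc (t / 2) t, ‖M (z t)‖ ^ 2 ≤ ‖M (z s)‖ ^ 2 + (2 * ρ)⁻¹ * G := by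
    intro s hs
    have hsub : ∫ u in s..t, ‖g u‖ ^ 2 ≤ G :=
      intervalIntegral.integral_mono_interval hs.1 hs.2 le_rfl
        (ae_of_all _ fun _ => sq_nonneg _) hg2
    have := hz.norm_sq_le_add_integral hM hρ (ht0.trans hs.1) hs.2
    nlinarith [inv_pos.2 (mul_pos two_pos hρ)]
  have hmean := intervalIntegral.integral_mono_on hht intervalIntegrable_const
    (hMz2.add intervalIntegrable_const) hpt
  rw [intervalIntegral.integral_const, intervalIntegral.integral_add hMz2 intervalIntegrable_const,
    intervalIntegral.integral_const, smul_eq_mul, smul_eq_mul] at hmean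
  have hweight : t / 2 * G ≤ ∫ u in t / 2..t, u * ‖g u‖ ^ 2 := by
    rw [← intervalIntegral.integral_const_mul]
    exact intervalIntegral.integral_mono_on hht (hg2.const_mul _)
      ((continuousOn_id.mul (hg.norm.pow 2)).intervalIntegrable_of_Ici ht0 (ht0.trans hht))
      fun u hu => mul_le_mul_of_nonneg_right hu.1 (sq_nonneg _)
  have hρ' : ρ⁻¹ * (t / 2 * G) ≤ ρ⁻¹ * ∫ u in t / 2..t, u * ‖g u‖ ^ 2 :=
    mul_le_mul_of_nonneg_left hweight (inv_nonneg.2 hρ.le)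
  have hinv : (2 * ρ)⁻¹ = ρ⁻¹ / 2 := by rw [mul_inv, div_eq_mul_inv, mul_comm]
  rw [hinv] at hmean
  nlinarith

theorem tendsto_sqrt_mul_norm (hz : IsPerturbedSolution M t0 z z' g) (hM : IsCocoercive M ρ)
    (hρ : 0 < ρ) (hp : M p = 0) (hg₁ : IntegrableOn (fun t => ‖g t‖) (Ioi t0))
    (hg₂ : IntegrableOn (fun t => t * ‖g t‖ ^ 2) (Ioi t0)) :
    Tendsto (fun t => √t * ‖M (z t)‖) atTop (𝓝 0) := by
  have hhalf : Tendsto (fun t : ℝ => t / 2) atTop atTop := tendsto_id.atTop_div_const two_pos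
  have hMz := tendsto_intervalIntegral_zero_of_integrableOn_Ioi
    ((hz.integrableOn_norm_sq hM hρ hp hg₁).mono_set Ioi_subset_Ici_self) hhalf tendsto_id
  have hg := tendsto_intervalIntegral_zero_of_integrableOn_Ioi hg₂ hhalf tendsto_id
  have hsq : Tendsto (fun t => t * ‖M (z t)‖ ^ 2) atTop (𝓝 0) := by
    refine squeeze_zero' ?_ ?_ (by simpa using (hMz.const_mul 2).add (hg.const_mul ρ⁻¹))
    · filter_upwards [eventually_ge_atTop 0] with t ht
      positivity
    · filter_upwards [eventually_ge_atTop (2 * t0), eventually_ge_atTop 0] with t ht ht'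
      exact hz.mul_norm_sq_le hM hρ (by linarith) ht'
  simpa [Function.comp_def, Real.sqrt_mul'] using (Real.continuous_sqrt.tendsto 0).comp hsq

end IsPerturbedSolution

end Dynamics

theorem cocoercive_perturbed_dynamics_convergence_general
    {H : Type*} [NormedAddCommGroup H] [InnerProductSpace ℝ H] [CompleteSpace H]
    (M : H → H) (ρ : ℝ) (hρ : 0 < ρ)
    (hco : ∀ x y : H, ρ * ‖M x - M y‖ ^ 2 ≤ ⟪M x - M y, x - y⟫)
    (hS : ∃ x, M x = 0)
    (t0 : ℝ)
    (z z' g : ℝ → H)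
    (hz : ∀ t ∈ Ici t0, HasDerivAt z (z' t) t)
    (hz'cont : ContinuousOn z' (Ici t0))
    (heq : ∀ t ∈ Ici t0, z' t + M (z t) = g t)
    (hg1 : IntegrableOn (fun t => ‖g t‖) (Ici t0))
    (hg2 : IntegrableOn (fun t => t * ‖g t‖ ^ 2) (Ici t0)) :
    Tendsto (fun t => Real.sqrt t * ‖M (z t)‖) atTop (nhds 0) ∧
    IntegrableOn (fun t => ‖M (z t)‖ ^ 2) (Ici t0) ∧
    ∃ xstar : H, M xstar = 0 ∧
      ∀ v : H, Tendsto (fun t => ⟪z t - xstar, v⟫) atTop (nhds 0) := by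
  obtain ⟨p, hp⟩ := hS
  have hM : IsCocoercive M ρ := hco
  have hsol : IsPerturbedSolution M t0 z z' g := ⟨hz, hz'cont, heq⟩
  have hg1' := hg1.mono_set Ioi_subset_Ici_self
  have hrate := hsol.tendsto_sqrt_mul_norm hM hρ hp hg1' (hg2.mono_set Ioi_subset_Ici_self)
  have hMz : Tendsto (fun t => M (z t)) atTop (𝓝 0) := tendsto_zero_iff_norm_tendsto_zero.2 <|
    tendsto_zero_of_tendsto_sqrt_mul (fun _ => norm_nonneg _) hrate
  have hbdd : ∀ᶠ t in atTop, ‖z t‖ ≤ ‖p‖ + (‖z t0 - p‖ + 2 * ∫ u in Ioi t0, ‖g u‖) := by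
    filter_upwards [eventually_ge_atTop t0] with t ht
    exact (norm_le_norm_add_norm_sub' (z t) p).trans
      (add_le_add_right (hsol.norm_sub_le hM hρ hp hg1' ht) _)
  obtain ⟨y, hy, hzy⟩ := exists_mem_weakTendsto_of_tendsto_norm_sub_sq (S := {x | M x = 0}) hbdd
    (fun q hq => hsol.exists_tendsto_norm_sub_sq hM hρ hq hg1')
    fun U y hU hUy => hM.apply_eq_zero_of_weakTendsto hρ (hbdd.filter_mono hU)
      (hMz.mono_left hU) hUy
  refine ⟨hrate, hsol.integrableOn_norm_sq hM hρ hp hg1', y, hy, fun v => ?_⟩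
  simpa [inner_sub_left] using (hzy v).sub_const ⟪y, v⟫

/-- Perturbed dynamics governed by a cocoercive operator: o(1/√t) rate for the operator
norm, square integrability, and weak convergence of the trajectory towards a zero of `M`. -/
theorem cocoercive_perturbed_dynamics_convergence
    {H : Type*} [NormedAddCommGroup H] [InnerProductSpace ℝ H] [CompleteSpace H]
    (M : H → H) (ρ : ℝ) (hρ : 0 < ρ)
    (hco : ∀ x y : H, ρ * ‖M x - M y‖ ^ 2 ≤ ⟪M x - M y, x - y⟫)
    (hS : ∃ x, M x = 0)
    (t0 : ℝ) (ht0 : 0 < t0)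
    (z z' g : ℝ → H)
    (hz : ∀ t ∈ Ici t0, HasDerivAt z (z' t) t)
    (hz'cont : ContinuousOn z' (Ici t0))
    (heq : ∀ t ∈ Ici t0, z' t + M (z t) = g t)
    (hg1 : IntegrableOn (fun t => ‖g t‖) (Ici t0))
    (hg2 : IntegrableOn (fun t => t * ‖g t‖ ^ 2) (Ici t0)) :
    Tendsto (fun t => Real.sqrt t * ‖M (z t)‖) atTop (nhds 0) ∧
    IntegrableOn (fun t => ‖M (z t)‖ ^ 2) (Ici t0) ∧
    ∃ xstar : H, M xstar = 0 ∧
      ∀ v : H, Tendsto (fun t => ⟪z t - xstar, v⟫) atTop (nhds 0) :=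
  cocoercive_perturbed_dynamics_convergence_general M ρ hρ hco hS t0 z z' g hz hz'cont heq hg1 hg2
end
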